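/- (Proposition 5) Let D ≥ 3 and let S'^{ijk} be a smooth tensor field on ℝ^D, antisymmetric in its last two indices (S'^{ijk} = −S'^{ikj}), satisfying ∂_k S'^{(ij)k} = 0 for all i,j (sum over k). Then there exist smooth tensor fields χ^{ijkr} on ℝ^D with χ^{ijkr} = χ^{i[jkr]} (totally antisymmetric in the last three indices) and η^{ijk} totally antisymmetric in all three indices, such that S'^{ijk} = ∂_r χ^{ijkr} + η^{ijk} (sum over r). -/

import Mathlib

/-!
`F^{ij} := ∂_k S'^{ijk}` is antisymmetric, which is exactly the hypothesis on the symmetric part of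
`S'`, and divergence-free, since `∂_j ∂_k S'^{ijk} = 0` by the antisymmetry of `S'` in `j k`.
A smooth antisymmetric divergence-free `F` on `ℝ^D` is the divergence `∂_r ψ^{jkr}` of the
totally antisymmetric cone potential
`ψ^{jkr}(x) = ∫₀¹ t^(D-3) (x^j F^{kr} + x^k F^{rj} + x^r F^{jk})(t x) dt`.
Take `η := ψ[F]`; then for each `i` the tensor `M^{ijk} := S'^{ijk} - η^{ijk}` is antisymmetric and
divergence-free in `j k`, and `χ^{i···} := ψ[M^{i··}]` gives `S' = ∂_r χ + η`.
-/

/-- Partial derivative in the k-th Cartesian coordinate direction on ℝ^D. -/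
noncomputable def pd {D : ℕ} (k : Fin D) (f : (Fin D → ℝ) → ℝ) : (Fin D → ℝ) → ℝ :=
  fun x => fderiv ℝ f x (Pi.single k 1)

open scoped ContDiff
open MeasureTheory

section ParametricIntegral

variable {E G : Type*} [NormedAddCommGroup E] [NormedSpace ℝ E] [NormedAddCommGroup G]
  [NormedSpace ℝ G]

lemma ContDiff.fderiv_slice {H : ℝ × E → G} {m n : WithTop ℕ∞} (hH : ContDiff ℝ m H)
    (hnm : n + 1 ≤ m) : ContDiff ℝ n fun p : ℝ × E => fderiv ℝ (fun y => H (p.1, y)) p.2 :=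
  ContDiff.fderiv (f := fun p y => H (p.1, y)) (hH.comp (contDiff_fst.fst.prodMk contDiff_snd))
    contDiff_snd hnm

lemma ContDiff.continuous_fderiv_slice {H : ℝ × E → G} (hH : ContDiff ℝ 1 H) (x : E) :
    Continuous fun t => fderiv ℝ (fun y => H (t, y)) x :=
  (hH.fderiv_slice (n := 0) le_rfl).continuous.comp (continuous_id.prodMk continuous_const)

variable [FiniteDimensional ℝ E]

lemma hasFDerivAt_intervalIntegral_of_contDiff {H : ℝ × E → G} (hH : ContDiff ℝ 1 H)
    (a b : ℝ) (x₀ : E) :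
    HasFDerivAt (fun x => ∫ t in a..b, H (t, x))
      (∫ t in a..b, fderiv ℝ (fun y => H (t, y)) x₀) x₀ := by
  obtain ⟨C, hC⟩ : ∃ C, ∀ p ∈ Set.uIcc a b ×ˢ Metric.closedBall x₀ 1,
      ‖fderiv ℝ (fun y => H (p.1, y)) p.2‖ ≤ C :=
    (isCompact_uIcc.prod (isCompact_closedBall x₀ 1)).exists_bound_of_continuousOn
      (hH.fderiv_slice (n := 0) le_rfl).continuous.continuousOn
  have hslice : ∀ x, Continuous fun t => H (t, x) := fun x => by fun_prop
  refine intervalIntegral.hasFDerivAt_integral_of_dominated_of_fderiv_le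
    (bound := fun _ => C) (Metric.ball_mem_nhds x₀ one_pos)
    (.of_forall fun x => (hslice x).aestronglyMeasurable) ((hslice x₀).intervalIntegrable _ _)
    (hH.continuous_fderiv_slice x₀).aestronglyMeasurable
    (.of_forall fun t ht x hx =>
      hC (t, x) ⟨Set.uIoc_subset_uIcc ht, Metric.ball_subset_closedBall hx⟩)
    intervalIntegrable_const (.of_forall fun t _ x _ => ?_)
  exact ((hH.differentiable one_ne_zero (t, x)).comp x
    ((differentiableAt_const t).prodMk differentiableAt_id)).hasFDerivAt

lemma contDiff_intervalIntegral_of_contDiff {H : ℝ × E → G} (hH : ContDiff ℝ ∞ H) (a b : ℝ) :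
    ContDiff ℝ ∞ fun x => ∫ t in a..b, H (t, x) := by
  refine contDiff_infty.2 fun n => ?_
  induction n generalizing H with
  | zero =>
    exact contDiff_zero.2 (intervalIntegral.continuous_parametric_intervalIntegral_of_continuous'
      (f := fun x t => H (t, x)) (hH.continuous.comp continuous_swap) a b)
  | succ n ih =>
    have hH1 : ContDiff ℝ 1 H := hH.of_le (by simp)
    -- unlike `contDiff_succ_iff_fderiv`, this keeps the codomain `G`, so `ih` applies
    rw [Nat.cast_succ, contDiff_succ_iff_fderiv_apply]
    refine ⟨fun x => (hasFDerivAt_intervalIntegral_of_contDiff hH1 a b x).differentiableAt,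
      by simp, fun v => ?_⟩
    have hderiv : (fun x => fderiv ℝ (fun x => ∫ t in a..b, H (t, x)) x v) =
        fun x => ∫ t in a..b, fderiv ℝ (fun y => H (t, y)) x v := by
      funext x
      rw [(hasFDerivAt_intervalIntegral_of_contDiff hH1 a b x).fderiv,
        ContinuousLinearMap.intervalIntegral_apply
          ((hH1.continuous_fderiv_slice x).intervalIntegrable _ _)]
    rw [hderiv]
    exact ih (H := fun p => fderiv ℝ (fun y => H (p.1, y)) p.2 v)
      ((hH.fderiv_slice (by simp)).clm_apply contDiff_const)

end ParametricIntegral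

section PartialDerivative

variable {D : ℕ} {f g : (Fin D → ℝ) → ℝ} {x : Fin D → ℝ}

lemma ContDiff.pd (hf : ContDiff ℝ ∞ f) (k : Fin D) : ContDiff ℝ ∞ (pd k f) :=
  hf.contDiff_fderiv_apply (m := ∞) (by simp) |>.comp (contDiff_id.prodMk contDiff_const)

lemma pd_neg (k : Fin D) : pd k (fun y => -f y) = fun y => -pd k f y := by
  funext y
  simp [pd]

lemma pd_add (k : Fin D) (hf : DifferentiableAt ℝ f x) (hg : DifferentiableAt ℝ g x) :
    pd k (fun y => f y + g y) x = pd k f x + pd k g x := by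
  simp [pd, fderiv_fun_add hf hg]

lemma pd_sub (k : Fin D) (hf : DifferentiableAt ℝ f x) (hg : DifferentiableAt ℝ g x) :
    pd k (fun y => f y - g y) x = pd k f x - pd k g x := by
  simp [pd, fderiv_fun_sub hf hg]

lemma pd_mul (k : Fin D) (hf : DifferentiableAt ℝ f x) (hg : DifferentiableAt ℝ g x) :
    pd k (fun y => f y * g y) x = pd k f x * g x + f x * pd k g x := by
  simp [pd, fderiv_fun_mul hf hg]
  ring

lemma pd_const_mul (k : Fin D) (c : ℝ) (hf : DifferentiableAt ℝ f x) :
    pd k (fun y => c * f y) x = c * pd k f x := by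
  simp [pd, fderiv_const_mul hf]

lemma pd_sum {ι : Type*} (s : Finset ι) (F : ι → (Fin D → ℝ) → ℝ) (k : Fin D)
    (hF : ∀ i ∈ s, DifferentiableAt ℝ (F i) x) :
    pd k (fun y => ∑ i ∈ s, F i y) x = ∑ i ∈ s, pd k (F i) x := by
  simp [pd, fderiv_fun_sum hF]

lemma pd_apply_coord (k a : Fin D) :
    pd k (fun y => y a) x = (Pi.single k (1 : ℝ) : Fin D → ℝ) a := by
  simp [pd, fderiv_apply]

lemma pd_comp_smul (k : Fin D) (t : ℝ) :
    pd k (fun y => f (t • y)) x = t * pd k f (t • x) := by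
  simp [pd, fderiv_comp_smul]

lemma fderiv_apply_eq_sum_pd (v : Fin D → ℝ) : fderiv ℝ f x v = ∑ r, v r * pd r f x := by
  conv_lhs => rw [← Finset.univ_sum_single v]
  rw [map_sum]
  refine Finset.sum_congr rfl fun r _ => ?_
  rw [pd, ← smul_eq_mul, ← map_smul, ← Pi.single_smul', smul_eq_mul, mul_one]

lemma pd_comm (hf : ContDiff ℝ ∞ f) (j k : Fin D) : pd j (pd k f) x = pd k (pd j f) x := by
  have hsymm := (hf.contDiffAt (x := x)).isSymmSndFDerivAt
    (by simp only [minSmoothness_of_isRCLikeNormedField]; exact WithTop.coe_le_coe.2 le_top)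
  have hfd (v w : Fin D → ℝ) :
      fderiv ℝ (fun y => fderiv ℝ f y v) x w = fderiv ℝ (fderiv ℝ f) x w v := by
    rw [fderiv_clm_apply ((hf.fderiv_right (m := ∞) (by simp)).differentiable (by simp) x)
      (differentiableAt_const v)]
    simp
  exact (hfd _ _).trans ((hsymm _ _).trans (hfd _ _).symm)

lemma pd_intervalIntegral {H : ℝ × (Fin D → ℝ) → ℝ} (hH : ContDiff ℝ 1 H) (a b : ℝ)
    (k : Fin D) :
    pd k (fun x => ∫ t in a..b, H (t, x)) x = ∫ t in a..b, pd k (fun y => H (t, y)) x := by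
  rw [pd, (hasFDerivAt_intervalIntegral_of_contDiff hH a b x).fderiv,
    ContinuousLinearMap.intervalIntegral_apply
      ((hH.continuous_fderiv_slice x).intervalIntegrable _ _)]
  rfl

lemma pd_coord_mul_comp_smul (hf : Differentiable ℝ f) (k a : Fin D) (t : ℝ) :
    pd k (fun y => y a * f (t • y)) x
      = (Pi.single k (1 : ℝ) : Fin D → ℝ) a * f (t • x) + x a * (t * pd k f (t • x)) := by
  rw [pd_mul k (by fun_prop) (by fun_prop), pd_apply_coord, pd_comp_smul]

lemma hasDerivAt_pow_succ_mul_comp_smul (hf : Differentiable ℝ f) (n : ℕ) (v : Fin D → ℝ)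
    (s : ℝ) :
    HasDerivAt (fun s : ℝ => s ^ (n + 1) * f (s • v))
      ((n + 1) * s ^ n * f (s • v) + s ^ (n + 1) * ∑ r, v r * pd r f (s • v)) s := by
  have hline : HasDerivAt (fun s : ℝ => f (s • v)) (fderiv ℝ f (s • v) v) s :=
    (hf (s • v)).hasFDerivAt.comp_hasDerivAt s
      ((hasDerivAt_id s).smul_const v |>.congr_deriv (by simp))
  rw [← fderiv_apply_eq_sum_pd]
  refine ((hasDerivAt_pow (n + 1) s).mul hline).congr_deriv ?_
  push_cast
  ring

end PartialDerivative

section Divergence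

variable {D : ℕ}

lemma sum_pd_eq_neg_sum_pd_swap {S : Fin D → Fin D → Fin D → (Fin D → ℝ) → ℝ}
    (hS : ∀ i j k, Differentiable ℝ (S i j k))
    (hdiv : ∀ i j x, ∑ k, pd k (fun y => (1 / 2 : ℝ) * (S i j k y + S j i k y)) x = 0)
    (i j : Fin D) (x : Fin D → ℝ) : ∑ k, pd k (S i j k) x = -∑ k, pd k (S j i k) x := by
  have hk : ∀ k, pd k (fun y => (1 / 2 : ℝ) * (S i j k y + S j i k y)) x
      = 1 / 2 * (pd k (S i j k) x + pd k (S j i k) x) := fun k => by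
    rw [pd_const_mul _ _ ((hS i j k x).fun_add (hS j i k x)), pd_add _ (hS i j k x) (hS j i k x)]
  have h := hdiv i j x
  rw [Finset.sum_congr rfl fun k _ => hk k, ← Finset.mul_sum, Finset.sum_add_distrib] at h
  linarith

lemma sum_pd_sum_pd_eq_zero {T : Fin D → Fin D → (Fin D → ℝ) → ℝ}
    (hT : ∀ j k, ContDiff ℝ ∞ (T j k)) (hTa : ∀ j k x, T j k x = -T k j x) (x : Fin D → ℝ) :
    ∑ j, pd j (fun y => ∑ k, pd k (T j k) y) x = 0 := by
  have hneg : ∀ j k, T j k = fun y => -T k j y := fun j k => funext (hTa j k)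
  have hsymm : ∑ j, ∑ k, pd j (pd k (T j k)) x = -∑ j, ∑ k, pd j (pd k (T j k)) x :=
    calc ∑ j, ∑ k, pd j (pd k (T j k)) x
        = ∑ k, ∑ j, pd k (pd j (T j k)) x := by
          rw [Finset.sum_comm]
          exact Finset.sum_congr rfl fun k _ =>
            Finset.sum_congr rfl fun j _ => pd_comm (hT j k) j k
      _ = ∑ k, ∑ j, -pd k (pd j (T k j)) x :=
          Finset.sum_congr rfl fun k _ => Finset.sum_congr rfl fun j _ => by
            rw [hneg j k, pd_neg, pd_neg]
      _ = -∑ j, ∑ k, pd j (pd k (T j k)) x := by simp only [Finset.sum_neg_distrib]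
  rw [Finset.sum_congr rfl fun j _ =>
    pd_sum _ _ j fun k _ => ((hT j k).pd k).differentiable (by simp) x]
  linarith

end Divergence

section ConePotential

variable {D : ℕ}

/-- The weight `t ^ (D - 3)` makes the divergence in `r` of this integrand equal to
`d/dt (t ^ (D - 2) * F j k (t • x))` when `F` is antisymmetric and divergence-free. -/
noncomputable def coneIntegrand (F : Fin D → Fin D → (Fin D → ℝ) → ℝ) (j k r : Fin D)
    (p : ℝ × (Fin D → ℝ)) : ℝ :=
  p.1 ^ (D - 3) *
    (p.2 j * F k r (p.1 • p.2) + p.2 k * F r j (p.1 • p.2) + p.2 r * F j k (p.1 • p.2))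

noncomputable def conePotential (F : Fin D → Fin D → (Fin D → ℝ) → ℝ) (j k r : Fin D)
    (x : Fin D → ℝ) : ℝ :=
  ∫ t in (0 : ℝ)..1, coneIntegrand F j k r (t, x)

variable {F : Fin D → Fin D → (Fin D → ℝ) → ℝ}

lemma contDiff_coneIntegrand (hF : ∀ a b, ContDiff ℝ ∞ (F a b)) (j k r : Fin D) :
    ContDiff ℝ ∞ (coneIntegrand F j k r) := by
  have hF' : ∀ a b, ContDiff ℝ ∞ fun p : ℝ × (Fin D → ℝ) => F a b (p.1 • p.2) :=
    fun a b => (hF a b).comp (contDiff_fst.smul contDiff_snd)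
  have hcoord : ∀ a, ContDiff ℝ ∞ fun p : ℝ × (Fin D → ℝ) => p.2 a :=
    fun a => (contDiff_apply ℝ ℝ a).comp contDiff_snd
  exact (contDiff_fst.pow _).mul ((((hcoord j).mul (hF' k r)).add ((hcoord k).mul (hF' r j))).add
    ((hcoord r).mul (hF' j k)))

lemma contDiff_conePotential (hF : ∀ a b, ContDiff ℝ ∞ (F a b)) (j k r : Fin D) :
    ContDiff ℝ ∞ (conePotential F j k r) :=
  contDiff_intervalIntegral_of_contDiff (contDiff_coneIntegrand hF j k r) 0 1

lemma conePotential_swap_left (hF : ∀ a b x, F a b x = -F b a x) (j k r : Fin D)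
    (x : Fin D → ℝ) : conePotential F j k r x = -conePotential F k j r x := by
  rw [conePotential, conePotential, ← intervalIntegral.integral_neg]
  refine intervalIntegral.integral_congr fun t _ => ?_
  simp only [coneIntegrand, hF k r, hF r j, hF j k]
  ring

lemma conePotential_swap_right (hF : ∀ a b x, F a b x = -F b a x) (j k r : Fin D)
    (x : Fin D → ℝ) : conePotential F j k r x = -conePotential F j r k x := by
  rw [conePotential, conePotential, ← intervalIntegral.integral_neg]
  refine intervalIntegral.integral_congr fun t _ => ?_
  simp only [coneIntegrand, hF k r, hF r j, hF j k]
  ring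

lemma sum_pd_coneIntegrand (hD : 3 ≤ D) (hF : ∀ a b, ContDiff ℝ ∞ (F a b))
    (hFa : ∀ a b x, F a b x = -F b a x) (hFd : ∀ a x, ∑ b, pd b (F a b) x = 0) (j k : Fin D)
    (t : ℝ) (x : Fin D → ℝ) :
    ∑ r, pd r (fun y => coneIntegrand F j k r (t, y)) x
      = ((D - 3 : ℕ) + 1) * t ^ (D - 3) * F j k (t • x)
        + t ^ (D - 3 + 1) * ∑ r, x r * pd r (F j k) (t • x) := by
  have hdiff : ∀ a b, Differentiable ℝ (F a b) := fun a b => (hF a b).differentiable (by simp)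
  have hFd_left : ∀ b y, ∑ a, pd a (F a b) y = 0 := fun b y => by
    have hneg : ∀ a, F a b = fun z => -F b a z := fun a => funext (hFa a b)
    simp only [hneg, pd_neg, Finset.sum_neg_distrib, hFd b y, neg_zero]
  have hterm : ∀ r, pd r (fun y => coneIntegrand F j k r (t, y)) x
      = t ^ (D - 3) * ((Pi.single r (1 : ℝ) : Fin D → ℝ) j * F k r (t • x)
          + x j * (t * pd r (F k r) (t • x))
        + ((Pi.single r (1 : ℝ) : Fin D → ℝ) k * F r j (t • x) + x k * (t * pd r (F r j) (t • x)))
        + ((Pi.single r (1 : ℝ) : Fin D → ℝ) r * F j k (t • x)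
          + t * (x r * pd r (F j k) (t • x)))) := fun r => by
    simp only [coneIntegrand]
    rw [pd_const_mul _ _ (by fun_prop), pd_add _ (by fun_prop) (by fun_prop),
      pd_add _ (by fun_prop) (by fun_prop), pd_coord_mul_comp_smul (hdiff k r),
      pd_coord_mul_comp_smul (hdiff r j), pd_coord_mul_comp_smul (hdiff j k)]
    ring
  rw [Finset.sum_congr rfl fun r _ => hterm r, ← Finset.mul_sum]
  simp only [Finset.sum_add_distrib, Pi.single_eq_same, Pi.single_apply, ite_mul, one_mul,
    zero_mul, Finset.sum_ite_eq, Finset.mem_univ, if_true, ← Finset.mul_sum, hFd k, hFd_left j,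
    Finset.sum_const, Finset.card_univ, Fintype.card_fin, nsmul_eq_mul]
  rw [hFa k j, Nat.cast_sub hD]
  ring

lemma sum_pd_conePotential (hD : 3 ≤ D) (hF : ∀ a b, ContDiff ℝ ∞ (F a b))
    (hFa : ∀ a b x, F a b x = -F b a x) (hFd : ∀ a x, ∑ b, pd b (F a b) x = 0) (j k : Fin D)
    (x : Fin D → ℝ) : ∑ r, pd r (conePotential F j k r) x = F j k x := by
  have hH : ∀ r, ContDiff ℝ 1 (coneIntegrand F j k r) :=
    fun r => (contDiff_coneIntegrand hF j k r).of_le (by simp)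
  have hint : ∀ r, IntervalIntegrable (fun t => pd r (fun y => coneIntegrand F j k r (t, y)) x)
      volume 0 1 := fun r =>
    ((hH r).continuous_fderiv_slice x |>.clm_apply continuous_const).intervalIntegrable _ _
  have hcont : Continuous (F j k) := (hF j k).continuous
  have hcont_pd : ∀ r, Continuous (pd r (F j k)) := fun r => ((hF j k).pd r).continuous
  calc ∑ r, pd r (conePotential F j k r) x
      = ∑ r, ∫ t in (0 : ℝ)..1, pd r (fun y => coneIntegrand F j k r (t, y)) x :=
        Finset.sum_congr rfl fun r _ => pd_intervalIntegral (hH r) 0 1 r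
    _ = ∫ t in (0 : ℝ)..1, ∑ r, pd r (fun y => coneIntegrand F j k r (t, y)) x :=
        (intervalIntegral.integral_finsetSum fun r _ => hint r).symm
    _ = ∫ t in (0 : ℝ)..1, (((D - 3 : ℕ) + 1) * t ^ (D - 3) * F j k (t • x)
          + t ^ (D - 3 + 1) * ∑ r, x r * pd r (F j k) (t • x)) :=
        intervalIntegral.integral_congr fun t _ => sum_pd_coneIntegrand hD hF hFa hFd j k t x
    _ = 1 ^ (D - 3 + 1) * F j k ((1 : ℝ) • x) - 0 ^ (D - 3 + 1) * F j k ((0 : ℝ) • x) :=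
        intervalIntegral.integral_eq_sub_of_hasDerivAt
          (fun s _ => hasDerivAt_pow_succ_mul_comp_smul ((hF j k).differentiable (by simp))
            (D - 3) x s)
          (Continuous.intervalIntegrable (by fun_prop) 0 1)
    _ = F j k x := by simp

end ConePotential

/-- Proposition 5: a smooth tensor field S'^{ijk} = −S'^{ikj} with
∂_k S'^{(ij)k} = 0 is of the form S'^{ijk} = ∂_r χ^{ijkr} + η^{ijk} with
χ^{ijkr} = χ^{i[jkr]} and η totally antisymmetric. -/
theorem stmt_13 (D : ℕ) (hD : 3 ≤ D)
    (S' : Fin D → Fin D → Fin D → (Fin D → ℝ) → ℝ)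
    (hsmooth : ∀ i j k, ContDiff ℝ (⊤ : ℕ∞) (S' i j k))
    (hanti : ∀ i j k x, S' i j k x = - S' i k j x)
    (hdiv : ∀ i j x, ∑ k, pd k (fun y => (1/2 : ℝ) * (S' i j k y + S' j i k y)) x = 0) :
    ∃ χ : Fin D → Fin D → Fin D → Fin D → (Fin D → ℝ) → ℝ,
    ∃ η : Fin D → Fin D → Fin D → (Fin D → ℝ) → ℝ,
      (∀ i j k r, ContDiff ℝ (⊤ : ℕ∞) (χ i j k r)) ∧
      (∀ i j k, ContDiff ℝ (⊤ : ℕ∞) (η i j k)) ∧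
      (∀ i j k r x, χ i j k r x = - χ i k j r x) ∧
      (∀ i j k r x, χ i j k r x = - χ i j r k x) ∧
      (∀ i j k x, η i j k x = - η j i k x) ∧
      (∀ i j k x, η i j k x = - η i k j x) ∧
      (∀ i j k x, S' i j k x = (∑ r, pd r (χ i j k r) x) + η i j k x) := by
  set F : Fin D → Fin D → (Fin D → ℝ) → ℝ := fun i j x => ∑ k, pd k (S' i j k) x
  have hF : ∀ i j, ContDiff ℝ ∞ (F i j) :=
    fun i j => ContDiff.sum fun k _ => (hsmooth i j k).pd k
  have hFa : ∀ i j x, F i j x = -F j i x :=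
    sum_pd_eq_neg_sum_pd_swap (fun i j k => (hsmooth i j k).differentiable (by simp)) hdiv
  have hFd : ∀ i x, ∑ j, pd j (F i j) x = 0 :=
    fun i => sum_pd_sum_pd_eq_zero (hsmooth i) (hanti i)
  set M : Fin D → Fin D → Fin D → (Fin D → ℝ) → ℝ :=
    fun i j k x => S' i j k x - conePotential F i j k x with hM
  have hMs : ∀ i j k, ContDiff ℝ ∞ (M i j k) :=
    fun i j k => (hsmooth i j k).sub (contDiff_conePotential hF i j k)
  have hMa : ∀ i j k x, M i j k x = -M i k j x := fun i j k x => by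
    simp only [hM, hanti i j k x, conePotential_swap_right hFa i j k x]
    ring
  have hMd : ∀ i j x, ∑ k, pd k (M i j k) x = 0 := fun i j x => by
    simp only [hM, pd_sub _ ((hsmooth i j _).differentiable (by simp) x)
      ((contDiff_conePotential hF i j _).differentiable (by simp) x), Finset.sum_sub_distrib,
      sum_pd_conePotential hD hF hFa hFd]
    exact sub_self _
  refine ⟨fun i => conePotential (M i), conePotential F, fun i => contDiff_conePotential (hMs i),
    contDiff_conePotential hF, fun i => conePotential_swap_left (hMa i),
    fun i => conePotential_swap_right (hMa i), conePotential_swap_left hFa,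
    conePotential_swap_right hFa, fun i j k x => ?_⟩
  rw [sum_pd_conePotential hD (hMs i) (hMa i) (hMd i)]
  ring
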